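/- arXiv:2311.15281 — 2 statements merged into one kernel-verified Lean document; each statement's English description precedes it below -/
import Mathlib

section
/- Existence of a fitting exponent: if μ is a real number with n/m < μ ≤ r/m, then there exists x ≥ 0 such that S(x) = μ, where r is the number of indices i with pᵢ > 0 and n is the number of indices i with pᵢ = 1. -/
/-- Existence of a fitting exponent: if `μ` satisfies `n/m < μ ≤ r/m`,
then there exists `x ≥ 0` with `S x = μ`. -/
theorem statement_8 (m : ℕ) (hm : 0 < m) (p : Fin m → ℝ)
    (hp : ∀ i, 0 ≤ p i ∧ p i ≤ 1)
    (S : ℝ → ℝ)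
    (hS : S = fun x => (1 / (m : ℝ)) * ∑ i ∈ Finset.univ.filter (fun i => 0 < p i), p i ^ x)
    (r : ℕ) (hr : r = (Finset.univ.filter (fun i => 0 < p i)).card)
    (n : ℕ) (hn : n = (Finset.univ.filter (fun i => p i = 1)).card)
    (μ : ℝ) (hμ1 : (n : ℝ) / (m : ℝ) < μ) (hμ2 : μ ≤ (r : ℝ) / (m : ℝ)) :
    ∃ x : ℝ, 0 ≤ x ∧ S x = μ := by
  set A := Finset.univ.filter (fun i => 0 < p i) with hA
  set B := Finset.univ.filter (fun i : Fin m => p i = 1) with hB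
  have hBA : B ⊆ A := by
    intro i hi
    simp only [hA, hB, Finset.mem_filter, Finset.mem_univ, true_and] at *
    rw [hi]; norm_num
  -- continuity
  have hcont : Continuous S := by
    rw [hS]
    apply Continuous.mul continuous_const
    apply continuous_finset_sum
    intro i hi
    have hpi : 0 < p i := by
      simpa [hA, Finset.mem_filter] using hi
    exact (Real.continuous_exp.comp (continuous_const.mul continuous_id)).congr
      (fun x => (Real.rpow_def_of_pos hpi x).symm)
  -- value at 0
  have hS0 : S 0 = (r : ℝ) / m := by
    rw [hS]
    simp only [Real.rpow_zero, Finset.sum_const, nsmul_eq_mul, mul_one]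
    rw [hr]
    ring
  -- limit at infinity
  have hlim : Filter.Tendsto S Filter.atTop (nhds ((n : ℝ) / m)) := by
    rw [hS]
    have hsplit : ∀ x : ℝ, ∑ i ∈ A, p i ^ x
        = ∑ i ∈ B, p i ^ x + ∑ i ∈ A \ B, p i ^ x := by
      intro x
      rw [← Finset.sum_sdiff hBA, add_comm]
    have hBsum : ∀ x : ℝ, ∑ i ∈ B, p i ^ x = (n : ℝ) := by
      intro x
      rw [hn]
      rw [Finset.sum_congr rfl (fun i hi => by
        have : p i = 1 := by simpa [hB, Finset.mem_filter] using hi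
        rw [this, Real.one_rpow])]
      simp
    have htend : Filter.Tendsto (fun x : ℝ => ∑ i ∈ A \ B, p i ^ x)
        Filter.atTop (nhds 0) := by
      have : Filter.Tendsto (fun x : ℝ => ∑ i ∈ A \ B, p i ^ x)
          Filter.atTop (nhds (∑ i ∈ A \ B, (0:ℝ))) := by
        apply tendsto_finset_sum
        intro i hi
        have h1 : 0 < p i := by
          have := Finset.sdiff_subset hi
          simpa [hA, Finset.mem_filter] using this
        have h2 : p i < 1 := by
          rcases Finset.mem_sdiff.mp hi with ⟨_, hnb⟩
          have : ¬ p i = 1 := by simpa [hB, Finset.mem_filter] using hnb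
          exact lt_of_le_of_ne (hp i).2 this
        exact tendsto_rpow_atTop_of_base_lt_one _ (by linarith) h2
      simpa using this
    have : Filter.Tendsto (fun x : ℝ => (1 / (m : ℝ)) * ∑ i ∈ A, p i ^ x)
        Filter.atTop (nhds ((1 / (m : ℝ)) * ((n : ℝ) + 0))) := by
      apply Filter.Tendsto.const_mul
      simp only [hsplit, hBsum]
      exact Filter.Tendsto.add tendsto_const_nhds htend
    simpa [div_eq_mul_inv, mul_comm] using this
  -- find X with S X < μ
  have hev : ∀ᶠ x in Filter.atTop, S x < μ := hlim.eventually_lt_const hμ1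
  obtain ⟨X, hX⟩ := (hev.and (Filter.eventually_ge_atTop (0:ℝ))).exists
  obtain ⟨hSX, hX0⟩ := hX
  have hμmem : μ ∈ Set.Icc (S X) (S 0) := ⟨le_of_lt hSX, by rw [hS0]; exact hμ2⟩
  obtain ⟨x, hx, hxval⟩ := intermediate_value_Icc' hX0 hcont.continuousOn hμmem
  exact ⟨x, hx.1, hxval⟩
end

section
/- Nonexistence below the range: if r > n and μ ≤ n/m, then there is no x ≥ 0 with S(x) = μ, but S(x) − μ tends to n/m − μ (the infimum of S(x) − μ over x ≥ 0) as x → ∞, where r is the number of indices i with pᵢ > 0 and n is the number of indices i with pᵢ = 1. -/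
/-- Nonexistence below the range: if `r > n` and `μ ≤ n/m`, then there is
no `x ≥ 0` with `S x = μ`, but `S x − μ` tends to `n/m − μ` (the infimum of `S x − μ`
over `x ≥ 0`) as `x → ∞`. -/
theorem statement_11 (m : ℕ) (hm : 0 < m) (p : Fin m → ℝ)
    (hp : ∀ i, 0 ≤ p i ∧ p i ≤ 1)
    (S : ℝ → ℝ)
    (hS : S = fun x => (1 / (m : ℝ)) * ∑ i ∈ Finset.univ.filter (fun i => 0 < p i), p i ^ x)
    (r : ℕ) (hr : r = (Finset.univ.filter (fun i => 0 < p i)).card)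
    (n : ℕ) (hn : n = (Finset.univ.filter (fun i => p i = 1)).card)
    (hrn : r > n) (μ : ℝ) (hμ : μ ≤ (n : ℝ) / (m : ℝ)) :
    (¬ ∃ x : ℝ, 0 ≤ x ∧ S x = μ) ∧
    Filter.Tendsto (fun x => S x - μ) Filter.atTop (nhds ((n : ℝ) / (m : ℝ) - μ)) ∧
    IsGLB ((fun x => S x - μ) '' Set.Ici 0) ((n : ℝ) / (m : ℝ) - μ) := by
  have hm' : (0:ℝ) < m := Nat.cast_pos.mpr hm
  set A := Finset.univ.filter (fun i => 0 < p i) with hA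
  set B := Finset.univ.filter (fun i => p i = 1) with hB
  have hBA : B ⊆ A := by
    intro i hi
    simp only [hA, hB, Finset.mem_filter, Finset.mem_univ, true_and] at *
    rw [hi]; norm_num
  set C := A \ B with hC
  have hCmem : ∀ i ∈ C, 0 < p i ∧ p i < 1 := by
    intro i hi
    simp only [hC, hA, hB, Finset.mem_sdiff, Finset.mem_filter, Finset.mem_univ, true_and] at hi
    exact ⟨hi.1, lt_of_le_of_ne (hp i).2 hi.2⟩
  have hsum : ∀ x : ℝ, ∑ i ∈ A, p i ^ x = (n : ℝ) + ∑ i ∈ C, p i ^ x := by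
    intro x
    rw [← Finset.sum_sdiff hBA, ← hC, add_comm]
    congr 1
    rw [hn]
    have : ∀ i ∈ B, p i ^ x = 1 := by
      intro i hi
      simp only [hB, Finset.mem_filter] at hi
      rw [hi.2, Real.one_rpow]
    rw [Finset.sum_congr rfl this, Finset.sum_const, nsmul_eq_mul, mul_one]
  have hSx : ∀ x : ℝ, S x = (n : ℝ) / m + (1 / (m:ℝ)) * ∑ i ∈ C, p i ^ x := by
    intro x
    rw [hS]
    simp only [← hA, hsum x]
    ring
  have hCne : C.Nonempty := by
    rw [← Finset.card_pos, Finset.card_sdiff_of_subset hBA, ← hr, ← hn]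
    omega
  -- positivity of the tail
  have htailpos : ∀ x : ℝ, 0 < ∑ i ∈ C, p i ^ x := by
    intro x
    apply Finset.sum_pos (fun i hi => Real.rpow_pos_of_pos (hCmem i hi).1 x) hCne
  have hgt : ∀ x : ℝ, (n:ℝ)/m < S x := by
    intro x
    rw [hSx x]
    have := htailpos x
    have : 0 < (1 / (m:ℝ)) * ∑ i ∈ C, p i ^ x := by positivity
    linarith
  -- tendsto
  have htend : Filter.Tendsto (fun x => S x - μ) Filter.atTop (nhds ((n : ℝ) / m - μ)) := by
    have h1 : Filter.Tendsto (fun x : ℝ => ∑ i ∈ C, p i ^ x) Filter.atTop (nhds 0) := by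
      have : Filter.Tendsto (fun x : ℝ => ∑ i ∈ C, p i ^ x) Filter.atTop
          (nhds (∑ i ∈ C, (0:ℝ))) := by
        apply tendsto_finset_sum
        intro i hi
        exact tendsto_rpow_atTop_of_base_lt_one _
          (by linarith [(hCmem i hi).1]) (hCmem i hi).2
      simpa using this
    have h2 : Filter.Tendsto (fun x => S x - μ) Filter.atTop
        (nhds ((n:ℝ)/m + (1/(m:ℝ)) * 0 - μ)) := by
      simp only [hSx]
      exact (((tendsto_const_nhds).add ((tendsto_const_nhds).mul h1)).sub tendsto_const_nhds)
    simpa using h2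
  refine ⟨?_, htend, ?_, ?_⟩
  · rintro ⟨x, hx, hxe⟩
    have := hgt x
    linarith
  · rintro y ⟨x, hx, rfl⟩
    have := hgt x
    simp only []
    linarith
  · intro b hb
    refine ge_of_tendsto htend ?_
    filter_upwards [Filter.eventually_ge_atTop (0:ℝ)] with x hx
    exact hb ⟨x, hx, rfl⟩
end
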